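/- arXiv:1203.6597 — 2 statements merged into one kernel-verified Lean document; each statement's English description precedes it below -/
import Mathlib

section
/- Let F(x̄), F(ȳ) ∈ ℝ⁴ be unit vectors, ν(x̄) ∈ ℝ⁴ a unit vector orthogonal to F(x̄), and Φ(x̄) > 0 a real number. If Φ(x̄)(1 − ⟨F(x̄),F(ȳ)⟩) + ⟨ν(x̄),F(ȳ)⟩ = 0, then |Φ(x̄)F(x̄) − ν(x̄)|²|F(ȳ)|² − ⟨Φ(x̄)F(x̄) − ν(x̄), F(ȳ)⟩² = 1; in particular the vectors F(ȳ) and Φ(x̄)F(x̄) − ν(x̄) are linearly independent. -/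
open RealInnerProductSpace

/-- If Φ(1 − ⟨p,q⟩) + ⟨ν,q⟩ = 0 with p,q,ν unit vectors, ⟨ν,p⟩ = 0, Φ > 0,
then |Φp − ν|²|q|² − ⟨Φp − ν, q⟩² = 1, and q and Φp − ν are linearly independent. -/
theorem stmt0 (p q ν : EuclideanSpace ℝ (Fin 4)) (Φ : ℝ)
    (hp : ‖p‖ = 1) (hq : ‖q‖ = 1) (hν : ‖ν‖ = 1)
    (hortho : ⟪ν, p⟫ = 0) (hΦ : 0 < Φ) (hne : p ≠ q)
    (hZ : Φ * (1 - ⟪p, q⟫) + ⟪ν, q⟫ = 0) :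
    ‖Φ • p - ν‖ ^ 2 * ‖q‖ ^ 2 - ⟪Φ • p - ν, q⟫ ^ 2 = 1 ∧
      LinearIndependent ℝ ![q, Φ • p - ν] := by
  have hinner : ⟪Φ • p - ν, q⟫ = Φ := by
    rw [inner_sub_left, real_inner_smul_left]
    linarith
  have hpν : ⟪Φ • p, ν⟫ = 0 := by
    rw [real_inner_smul_left, real_inner_comm, hortho, mul_zero]
  have hnorm : ‖Φ • p - ν‖ ^ 2 = Φ ^ 2 + 1 := by
    rw [norm_sub_sq_real, hpν, norm_smul, hp, hν]
    simp [abs_of_pos hΦ]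
  refine ⟨by rw [hnorm, hinner, hq]; ring, ?_⟩
  rw [LinearIndependent.pair_iff]
  intro s t hst
  have h1 : ⟪Φ • p - ν, s • q + t • (Φ • p - ν)⟫ = 0 := by rw [hst, inner_zero_right]
  have h2 : ⟪q, s • q + t • (Φ • p - ν)⟫ = 0 := by rw [hst, inner_zero_right]
  rw [inner_add_right, real_inner_smul_right, real_inner_smul_right, hinner,
    real_inner_self_eq_norm_sq, hnorm] at h1
  rw [inner_add_right, real_inner_smul_right, real_inner_smul_right,
    real_inner_self_eq_norm_sq, hq, real_inner_comm, hinner] at h2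
  constructor <;> nlinarith [sq_nonneg Φ, hΦ]
end

section
/- Let Σ be a closed surface and let A be a symmetric 2-tensor field on Σ that is trace-free (with respect to a Riemannian metric g) and satisfies the Codazzi equation (∇_X A)(Y,Z) = (∇_Y A)(X,Z) for all vector fields X,Y,Z. Then at every point where A ≠ 0, one has |∇A|² = 2 |∇|A||². -/
/-!
Pointwise, a trace-free symmetric tensor on a surface is determined by two numbers `(a, b)`, and a
trace-free Codazzi tensor `∇A` (totally symmetric and trace-free) by two numbers `(p, q)`. Then
`|A|² = 2(a² + b²)`, `|∇A|² = 4(p² + q²)`, and the two components of `⟨∇A, A⟩` are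
`2(pa + qb)` and `2(qa - pb)`. Lagrange's identity
`(pa + qb)² + (qa - pb)² = (p² + q²)(a² + b²)` (multiplicativity of the complex modulus) then gives
`2 |⟨∇A, A⟩|² = |∇A|² |A|²`, which is the claim after dividing by `|A|²`.
-/

lemma sum_mul_of_symm_traceFree {A B : Fin 2 → Fin 2 → ℝ}
    (hAsymm : ∀ j k, A j k = A k j) (hAtf : A 0 0 + A 1 1 = 0)
    (hBsymm : ∀ j k, B j k = B k j) (hBtf : B 0 0 + B 1 1 = 0) :
    ∑ j, ∑ k, B j k * A j k = 2 * (B 0 0 * A 0 0 + B 0 1 * A 0 1) := by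
  have hA11 : A 1 1 = -A 0 0 := by linarith
  have hB11 : B 1 1 = -B 0 0 := by linarith
  simp only [Fin.sum_univ_two, hAsymm 1 0, hBsymm 1 0, hA11, hB11]
  ring

lemma sum_sq_of_symm_traceFree {A : Fin 2 → Fin 2 → ℝ}
    (hAsymm : ∀ j k, A j k = A k j) (hAtf : A 0 0 + A 1 1 = 0) :
    ∑ j, ∑ k, A j k ^ 2 = 2 * (A 0 0 ^ 2 + A 0 1 ^ 2) := by
  simpa only [sq] using sum_mul_of_symm_traceFree hAsymm hAtf hAsymm hAtf

section Codazzi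

variable {T : Fin 2 → Fin 2 → Fin 2 → ℝ}

lemma codazzi_one_zero_zero (hTsymm : ∀ i j k, T i j k = T i k j)
    (hCodazzi : ∀ i j k, T i j k = T j i k) : T 1 0 0 = T 0 0 1 := by
  rw [hCodazzi, hTsymm]

lemma codazzi_one_zero_one (hTtf : ∀ i, T i 0 0 + T i 1 1 = 0)
    (hCodazzi : ∀ i j k, T i j k = T j i k) : T 1 0 1 = -T 0 0 0 := by
  linarith [hCodazzi 1 0 1, hTtf 0]

variable {A : Fin 2 → Fin 2 → ℝ}

lemma two_mul_sum_sq_inner_eq_of_codazzi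
    (hAsymm : ∀ j k, A j k = A k j) (hAtf : A 0 0 + A 1 1 = 0)
    (hTsymm : ∀ i j k, T i j k = T i k j) (hTtf : ∀ i, T i 0 0 + T i 1 1 = 0)
    (hCodazzi : ∀ i j k, T i j k = T j i k) :
    2 * ∑ i, (∑ j, ∑ k, T i j k * A j k) ^ 2 =
      (∑ i, ∑ j, ∑ k, T i j k ^ 2) * ∑ j, ∑ k, A j k ^ 2 := by
  have inner_eq i := sum_mul_of_symm_traceFree hAsymm hAtf (hTsymm i) (hTtf i)
  have norm_eq i := sum_sq_of_symm_traceFree (hTsymm i) (hTtf i)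
  simp only [inner_eq, norm_eq, sum_sq_of_symm_traceFree hAsymm hAtf]
  rw [Fin.sum_univ_two, Fin.sum_univ_two, codazzi_one_zero_zero hTsymm hCodazzi,
    codazzi_one_zero_one hTtf hCodazzi]
  ring

end Codazzi

/-- pointwise form, in an orthonormal frame at a point of a surface, of the
identity |∇A|² = 2|∇|A||² for a trace-free symmetric Codazzi tensor A ≠ 0.  Here
`A j k` are the components of the tensor and `T i j k` the components of its covariant
derivative (∇_i A)(j,k); the gradient of |A| has components (∑ T i j k · A j k)/|A|. -/
theorem stmt4 (A : Fin 2 → Fin 2 → ℝ) (T : Fin 2 → Fin 2 → Fin 2 → ℝ)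
    (hAsymm : ∀ j k, A j k = A k j)
    (hAtf : A 0 0 + A 1 1 = 0)
    (hTsymm : ∀ i j k, T i j k = T i k j)
    (hTtf : ∀ i, T i 0 0 + T i 1 1 = 0)
    (hCodazzi : ∀ i j k, T i j k = T j i k)
    (hA : ∑ j, ∑ k, (A j k) ^ 2 ≠ 0) :
    ∑ i, ∑ j, ∑ k, (T i j k) ^ 2 =
      2 * ∑ i, ((∑ j, ∑ k, T i j k * A j k) / Real.sqrt (∑ j, ∑ k, (A j k) ^ 2)) ^ 2 := by
  have hnonneg : 0 ≤ ∑ j, ∑ k, (A j k) ^ 2 := by positivity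
  simp only [div_pow, Real.sq_sqrt hnonneg, ← Finset.sum_div, ← mul_div_assoc,
    two_mul_sum_sq_inner_eq_of_codazzi hAsymm hAtf hTsymm hTtf hCodazzi]
  field_simp
end
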